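/- Let m ≥ 1 be an integer, let s > max{2(m−1), m} + 1/2, and let ψ ∈ L^{2,s}(ℝ). Then the following are equivalent: (i) ∫_ℝ x^j ψ(x) dx = 0 for every j = 0, 1, …, m−1; (ii) ⟨ψ, G_{2j} ψ⟩ = 0 for every j = 0, 1, …, m−1. -/
import Mathlib

open MeasureTheory Filter

/-- Membership in the weighted space `L^{2,s}(ℝ)`. -/
def MemL2s (s : ℝ) (ψ : ℝ → ℂ) : Prop :=
  Measurable ψ ∧ Integrable (fun x : ℝ => (1 + x ^ 2) ^ s * ‖ψ x‖ ^ 2)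

/-- `⟨ψ, G_{2j} ψ⟩ = −(1/(2·(2j)!)) ∬ conj(ψ(x)) (x−y)^{2j} ψ(y) dx dy`. -/
noncomputable def Gpair (j : ℕ) (ψ : ℝ → ℂ) : ℂ :=
  -(1 / (2 * (Nat.factorial (2 * j) : ℂ))) *
    ∫ x : ℝ, ∫ y : ℝ, (starRingEnd ℂ) (ψ x) * ((x : ℂ) - (y : ℂ)) ^ (2 * j) * ψ y

lemma integrable_one_add_sq_rpow {r : ℝ} (hr : r < -(1/2)) :
    Integrable (fun x : ℝ => ((1:ℝ) + x^2) ^ r) := by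
  have h : (Module.finrank ℝ ℝ : ℝ) < -2*r := by
    simp only [Module.finrank_self, Nat.cast_one]; linarith
  have := integrable_rpow_neg_one_add_norm_sq (E := ℝ) (μ := volume) h
  have e : ∀ x : ℝ, ((1:ℝ) + ‖x‖^2) ^ (-(-2*r)/2) = ((1:ℝ)+x^2) ^ r := by
    intro x
    rw [Real.norm_eq_abs, sq_abs]
    norm_num
  simpa only [e] using this

lemma moment_integrable {s : ℝ} {ψ : ℝ → ℂ} (hψ : MemL2s s ψ) (k : ℕ)
    (hk : (k : ℝ) + 1/2 < s) :
    Integrable fun x : ℝ => (x:ℂ)^k * ψ x := by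
  have hmeas : Measurable fun x : ℝ => (x:ℂ)^k * ψ x :=
    ((Complex.measurable_ofReal.comp measurable_id).pow_const k).mul hψ.1
  have hpos : ∀ x : ℝ, (0:ℝ) < 1 + x^2 := fun x => by positivity
  have hint2 : Integrable (fun x : ℝ => ((1:ℝ) + x^2) ^ ((k:ℝ) - s)) :=
    integrable_one_add_sq_rpow (by linarith)
  have hg : Integrable (fun x : ℝ =>
      (1/2 : ℝ) * ((1 + x^2) ^ s * ‖ψ x‖^2 + ((1:ℝ)+x^2) ^ ((k:ℝ) - s))) :=
    (hψ.2.add hint2).const_mul _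
  refine hg.mono' hmeas.aestronglyMeasurable (Filter.Eventually.of_forall fun x => ?_)
  have h1 : ‖(x:ℂ)^k * ψ x‖ = |x|^k * ‖ψ x‖ := by
    rw [norm_mul, norm_pow, Complex.norm_real, Real.norm_eq_abs]
  set c : ℝ := 1 + x^2 with hc
  have hcpos : (0:ℝ) < c := hpos x
  set t : ℝ := c ^ (s/2) * ‖ψ x‖ with ht
  set u : ℝ := |x|^k * c ^ (-(s/2)) with hu
  have htu : t * u = |x|^k * ‖ψ x‖ := by
    rw [ht, hu]
    have : c ^ (s/2) * c ^ (-(s/2)) = 1 := by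
      rw [← Real.rpow_add hcpos]; norm_num
    calc c ^ (s/2) * ‖ψ x‖ * (|x|^k * c ^ (-(s/2)))
        = (c ^ (s/2) * c ^ (-(s/2))) * (|x|^k * ‖ψ x‖) := by ring
      _ = |x|^k * ‖ψ x‖ := by rw [this, one_mul]
  have ht2 : t^2 = c ^ s * ‖ψ x‖^2 := by
    rw [ht, mul_pow, ← Real.rpow_natCast (c ^ (s/2)) 2, ← Real.rpow_mul hcpos.le]
    norm_num
  have hu2 : u^2 ≤ c ^ ((k:ℝ) - s) := by
    rw [hu, mul_pow, ← Real.rpow_natCast (c ^ (-(s/2))) 2, ← Real.rpow_mul hcpos.le]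
    have h3 : (|x|^k)^2 = (x^2)^k := by
      calc (|x|^k)^2 = (|x|^2)^k := by rw [← pow_mul, ← pow_mul, mul_comm]
        _ = (x^2)^k := by rw [sq_abs]
    rw [h3]
    have h4 : (x^2)^k ≤ c^k := by
      apply pow_le_pow_left₀ (sq_nonneg x)
      rw [hc]; linarith
    calc (x^2)^k * c ^ (-(s/2) * 2) ≤ c^k * c ^ (-(s/2)*2) := by
          apply mul_le_mul_of_nonneg_right h4 (Real.rpow_nonneg hcpos.le _)
      _ = c ^ ((k:ℝ) - s) := by
          rw [← Real.rpow_natCast c k, ← Real.rpow_add hcpos, sub_eq_add_neg]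
          norm_num
  have key : ‖(x:ℂ)^k * ψ x‖ ≤ (1/2) * (t^2 + u^2) := by
    rw [h1, ← htu]
    nlinarith [sq_nonneg (t - u), mul_nonneg (Real.rpow_nonneg hcpos.le (s/2)) (norm_nonneg (ψ x)), mul_nonneg (pow_nonneg (abs_nonneg x) k) (Real.rpow_nonneg hcpos.le (-(s/2)))]
  calc ‖(x:ℂ)^k * ψ x‖ ≤ (1/2) * (t^2 + u^2) := key
    _ ≤ (1/2 : ℝ) * ((1 + x^2) ^ s * ‖ψ x‖^2 + ((1:ℝ)+x^2) ^ ((k:ℝ) - s)) := by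
        rw [← ht2]; nlinarith [hu2]

lemma conj_moment_integrable {ψ : ℝ → ℂ} (i : ℕ)
    (h : Integrable fun x : ℝ => (x:ℂ)^i * ψ x) :
    Integrable fun x : ℝ => (starRingEnd ℂ) ((x:ℂ)^i * ψ x) :=
  (Complex.conjCLE.toContinuousLinearEquiv.toContinuousLinearMap).integrable_comp h

lemma double_integral_eq {ψ : ℝ → ℂ} {N : ℕ}
    (hInt : ∀ n ≤ N, Integrable fun x : ℝ => (x:ℂ)^n * ψ x) {n : ℕ} (hn : n ≤ N) :
    (∫ x : ℝ, ∫ y : ℝ, (starRingEnd ℂ) (ψ x) * ((x:ℂ) - (y:ℂ))^n * ψ y)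
      = ∑ i ∈ Finset.range (n+1), (-1:ℂ)^(i+n) * (n.choose i : ℂ) *
          (starRingEnd ℂ) (∫ x : ℝ, (x:ℂ)^i * ψ x) * (∫ x : ℝ, (x:ℂ)^(n-i) * ψ x) := by
  set M : ℕ → ℂ := fun i => ∫ x : ℝ, (x:ℂ)^i * ψ x with hM
  have hIy : ∀ x : ℝ, (∫ y : ℝ, ((x:ℂ) - y)^n * ψ y)
      = ∑ i ∈ Finset.range (n+1), ((-1:ℂ)^(i+n) * (x:ℂ)^i * (n.choose i)) * M (n-i) := by
    intro x
    have key : (fun y : ℝ => ((x:ℂ) - y)^n * ψ y)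
        = fun y : ℝ => ∑ i ∈ Finset.range (n+1),
            ((-1:ℂ)^(i+n) * (x:ℂ)^i * (n.choose i)) * ((y:ℂ)^(n-i) * ψ y) := by
      funext y
      rw [sub_pow, Finset.sum_mul]
      exact Finset.sum_congr rfl fun i _ => by ring
    rw [key, integral_finset_sum _ (fun i _ => (hInt (n-i) (by omega)).const_mul _)]
    exact Finset.sum_congr rfl fun i _ => integral_const_mul _ _
  calc (∫ x : ℝ, ∫ y : ℝ, (starRingEnd ℂ) (ψ x) * ((x:ℂ) - y)^n * ψ y)
      = ∫ x : ℝ, ∑ i ∈ Finset.range (n+1),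
          ((-1:ℂ)^(i+n) * (n.choose i) * M (n-i)) * (starRingEnd ℂ) ((x:ℂ)^i * ψ x) := by
        congr 1; funext x
        have e1 : (fun y : ℝ => (starRingEnd ℂ) (ψ x) * ((x:ℂ) - y)^n * ψ y)
            = fun y : ℝ => (starRingEnd ℂ) (ψ x) * (((x:ℂ) - y)^n * ψ y) := by
          funext y; ring
        rw [e1, integral_const_mul, hIy x, Finset.mul_sum]
        refine Finset.sum_congr rfl fun i _ => ?_
        rw [map_mul, map_pow, Complex.conj_ofReal]
        ring
    _ = ∑ i ∈ Finset.range (n+1),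
          ((-1:ℂ)^(i+n) * (n.choose i) * M (n-i)) * (starRingEnd ℂ) (M i) := by
        rw [integral_finset_sum _
          (fun i hi => (conj_moment_integrable i (hInt i (by
            simp only [Finset.mem_range] at hi; omega))).const_mul _)]
        exact Finset.sum_congr rfl fun i _ => by rw [integral_const_mul, integral_conj]
    _ = ∑ i ∈ Finset.range (n+1), (-1:ℂ)^(i+n) * (n.choose i : ℂ) *
          (starRingEnd ℂ) (M i) * M (n-i) :=
        Finset.sum_congr rfl fun i _ => by ring

/-- For `ψ ∈ L^{2,s}(ℝ)` with `s > max{2(m−1), m} + 1/2`, the vanishing of the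
first `m` moments of `ψ` is equivalent to the vanishing of `⟨ψ, G_{2j}ψ⟩`
for `j = 0, 1, …, m−1`. -/
theorem stmt10 (m : ℕ) (hm : 1 ≤ m) (s : ℝ)
    (hs : s > max (2 * ((m : ℝ) - 1)) (m : ℝ) + 1 / 2)
    (ψ : ℝ → ℂ) (hψ : MemL2s s ψ) :
    (∀ j < m, ∫ x : ℝ, (x : ℂ) ^ j * ψ x = 0) ↔ (∀ j < m, Gpair j ψ = 0) := by
  set M : ℕ → ℂ := fun i => ∫ x : ℝ, (x:ℂ)^i * ψ x with hM
  have hInt : ∀ n ≤ 2*m - 2, Integrable fun x : ℝ => (x:ℂ)^n * ψ x := by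
    intro n hn
    apply moment_integrable hψ
    have h1 : (n:ℝ) ≤ 2 * ((m:ℝ) - 1) := by
      have : (n:ℝ) ≤ ((2*m - 2 : ℕ) : ℝ) := Nat.cast_le.2 hn
      have h2 : ((2*m - 2 : ℕ) : ℝ) = 2 * ((m:ℝ) - 1) := by
        have : (2*m - 2 : ℕ) + 2 = 2*m := by omega
        have h3 : ((2*m - 2 : ℕ) : ℝ) + 2 = 2*(m:ℝ) := by
          exact_mod_cast congrArg (Nat.cast : ℕ → ℝ) this
        linarith
      linarith
    have h4 : 2 * ((m:ℝ) - 1) ≤ max (2 * ((m : ℝ) - 1)) (m : ℝ) := le_max_left _ _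
    linarith
  have hGS : ∀ j < m, Gpair j ψ = -(1 / (2 * (Nat.factorial (2 * j) : ℂ))) *
      ∑ i ∈ Finset.range (2*j+1), (-1:ℂ)^(i+2*j) * ((2*j).choose i : ℂ) *
          (starRingEnd ℂ) (M i) * M (2*j-i) := by
    intro j hj
    rw [Gpair, double_integral_eq hInt (show 2*j ≤ 2*m-2 by omega)]
  have hc : ∀ j : ℕ, -(1 / (2 * (Nat.factorial (2 * j) : ℂ))) ≠ 0 := by
    intro j
    have hfac : ((2*j).factorial : ℂ) ≠ 0 := Nat.cast_ne_zero.2 (Nat.factorial_ne_zero _)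
    exact neg_ne_zero.2 (one_div_ne_zero (mul_ne_zero two_ne_zero hfac))
  constructor
  · intro h j hj
    rw [hGS j hj, mul_eq_zero]
    right
    apply Finset.sum_eq_zero
    intro i hi
    simp only [Finset.mem_range] at hi
    by_cases hcase : i < m
    · rw [show M i = 0 from h i hcase, map_zero]; ring
    · have : 2*j - i < m := by omega
      rw [show M (2*j - i) = 0 from h _ this]; ring
  · intro h
    have H : ∀ j, j < m → M j = 0 := by
      intro j
      induction j using Nat.strong_induction_on with
      | _ j ih =>
        intro hj
        have hG := h j hj
        rw [hGS j hj, mul_eq_zero] at hG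
        rcases hG with hG | hG
        · exact absurd hG (hc j)
        have hsum : (∑ i ∈ Finset.range (2*j+1), (-1:ℂ)^(i+2*j) * ((2*j).choose i : ℂ) *
            (starRingEnd ℂ) (M i) * M (2*j-i))
            = (-1:ℂ)^(j+2*j) * ((2*j).choose j : ℂ) * (starRingEnd ℂ) (M j) * M j := by
          rw [Finset.sum_eq_single j]
          · congr 2; omega
          · intro i hi hij
            rcases lt_or_gt_of_ne hij with hlt | hgt
            · rw [show M i = 0 from ih i hlt (by omega), map_zero]; ring
            · have h2 : 2*j - i < j := by simp only [Finset.mem_range] at hi; omega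
              rw [show M (2*j - i) = 0 from ih _ h2 (by omega)]; ring
          · intro habs; exact absurd (Finset.mem_range.2 (by omega)) habs
        rw [hsum] at hG
        have hne1 : ((-1:ℂ)^(j+2*j)) ≠ 0 := pow_ne_zero _ (by norm_num)
        have hne2 : (((2*j).choose j : ℂ)) ≠ 0 :=
          Nat.cast_ne_zero.2 (Nat.choose_pos (by omega : j ≤ 2*j)).ne'
        have h5 : (starRingEnd ℂ) (M j) * M j = 0 := by
          rcases mul_eq_zero.1 hG with h' | h'
          · rcases mul_eq_zero.1 h' with h'' | h''
            · rcases mul_eq_zero.1 h'' with h3 | h3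
              · exact absurd h3 hne1
              · exact absurd h3 hne2
            · rw [h'']; rw [starRingEnd_apply, star_eq_zero] at h''; rw [zero_mul]
          · rw [h', mul_zero]
        rcases mul_eq_zero.1 h5 with h6 | h6
        · rwa [starRingEnd_apply, star_eq_zero] at h6
        · exact h6
    intro j hj
    exact H j hj
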